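/- arXiv:1806.03597 — 6 statements merged into one kernel-verified Lean document; each statement's English description precedes it below -/
import Mathlib

section
/- Let {Λ_j}_{j∈J} be a g-frame for H with bounds A, B, with frame operator S f = Σ_j Λ_j* Λ_j f and canonical dual Λ̃_j = Λ_j S⁻¹. For I ⊆ J define S_I f = Σ_{j∈I} Λ_j* Λ̃_j f. Then S_I is a bounded operator with ‖S_I f‖² ≤ B A⁻¹ ‖f‖² for all f ∈ H. -/
/-!
Put `g = S⁻¹ f`. Since `S g = f`, the frame coefficients of `g` satisfy
`∑ ‖Λ_j g‖² = re ⟪g, f⟫ ≤ ‖g‖ ‖f‖`, and together with the lower frame bound this gives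
`∑ ‖Λ_j g‖² ≤ A⁻¹ ‖f‖²`. Now `S_I f = ∑_{j ∈ I} Λ_j* (Λ_j g)` is the synthesis operator of the
Bessel family `{Λ_j}_{j ∈ I}` applied to the coefficients `Λ_j g`, and the synthesis operator of a
Bessel family with bound `B` has norm at most `√B`.
-/

open ContinuousLinearMap

open scoped InnerProductSpace

section

variable {𝕜 ι : Type*} [RCLike 𝕜] {E : ι → Type*} [∀ j, NormedAddCommGroup (E j)]
  [∀ j, InnerProductSpace 𝕜 (E j)]

/-- Cauchy–Schwarz in the Hilbert sum `ℓ²(ι, E)`. -/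
theorem norm_sq_le_tsum_mul_tsum_of_hasSum_inner {u v : ∀ j, E j} {c : 𝕜}
    (hu : Summable fun j => ‖u j‖ ^ 2) (hv : Summable fun j => ‖v j‖ ^ 2)
    (hc : HasSum (fun j => ⟪u j, v j⟫_𝕜) c) :
    ‖c‖ ^ 2 ≤ (∑' j, ‖u j‖ ^ 2) * ∑' j, ‖v j‖ ^ 2 := by
  let x : lp E 2 := ⟨u, memℓp_gen (by simpa using hu)⟩
  let y : lp E 2 := ⟨v, memℓp_gen (by simpa using hv)⟩
  have norm_sq_eq (z : lp E 2) : ‖z‖ ^ 2 = ∑' j, ‖z j‖ ^ 2 := by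
    simpa using lp.norm_rpow_eq_tsum (p := 2) (by norm_num) z
  rw [hc.unique (lp.hasSum_inner x y), ← norm_sq_eq x, ← norm_sq_eq y, ← mul_pow]
  exact pow_le_pow_left₀ (norm_nonneg _) (norm_inner_le_norm x y) 2

end

section

variable {𝕜 H ι : Type*} [RCLike 𝕜] [NormedAddCommGroup H] [InnerProductSpace 𝕜 H]
  [CompleteSpace H] {E : ι → Type*} [∀ j, NormedAddCommGroup (E j)]
  [∀ j, InnerProductSpace 𝕜 (E j)] [∀ j, CompleteSpace (E j)]

theorem hasSum_inner_adjoint_apply {Λ : ∀ j, H →L[𝕜] E j} {c : ∀ j, E j} {y : H}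
    (hy : HasSum (fun j => adjoint (Λ j) (c j)) y) (x : H) :
    HasSum (fun j => ⟪Λ j x, c j⟫_𝕜) ⟪x, y⟫_𝕜 := by
  simpa only [innerSL_apply_apply, adjoint_inner_right] using (innerSL 𝕜 x).hasSum hy

theorem hasSum_norm_sq_of_hasSum_adjoint_apply {Λ : ∀ j, H →L[𝕜] E j} {g f : H}
    (hf : HasSum (fun j => adjoint (Λ j) (Λ j g)) f) :
    HasSum (fun j => ‖Λ j g‖ ^ 2) (RCLike.re ⟪g, f⟫_𝕜) := by
  simpa only [map_pow, RCLike.re_ofReal_pow, inner_self_eq_norm_sq_to_K, RCLike.reCLM_apply]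
    using RCLike.reCLM.hasSum (hasSum_inner_adjoint_apply hf g)

theorem mul_tsum_norm_sq_le_of_hasSum_adjoint_apply {Λ : ∀ j, H →L[𝕜] E j} {A : ℝ} {g f : H}
    (hlow : A * ‖g‖ ^ 2 ≤ ∑' j, ‖Λ j g‖ ^ 2)
    (hf : HasSum (fun j => adjoint (Λ j) (Λ j g)) f) :
    A * ∑' j, ‖Λ j g‖ ^ 2 ≤ ‖f‖ ^ 2 := by
  have hT := hasSum_norm_sq_of_hasSum_adjoint_apply hf
  have hTle : ∑' j, ‖Λ j g‖ ^ 2 ≤ ‖g‖ * ‖f‖ := by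
    rw [hT.tsum_eq]
    exact (RCLike.re_le_norm _).trans (norm_inner_le_norm g f)
  have hT0 : 0 ≤ ∑' j, ‖Λ j g‖ ^ 2 := tsum_nonneg fun j => by positivity
  rcases le_or_gt A 0 with hA | hA
  · nlinarith
  · nlinarith [sq_nonneg (A * ‖g‖ - ‖f‖), mul_le_mul_of_nonneg_left hTle hA.le]

theorem norm_sq_le_of_hasSum_adjoint_apply {Λ : ∀ j, H →L[𝕜] E j} {B : ℝ} (hB : 0 ≤ B)
    (hsum : ∀ f : H, Summable fun j => ‖Λ j f‖ ^ 2)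
    (hup : ∀ f : H, ∑' j, ‖Λ j f‖ ^ 2 ≤ B * ‖f‖ ^ 2)
    {c : ∀ j, E j} (hc : Summable fun j => ‖c j‖ ^ 2) {y : H}
    (hy : HasSum (fun j => adjoint (Λ j) (c j)) y) :
    ‖y‖ ^ 2 ≤ B * ∑' j, ‖c j‖ ^ 2 := by
  have hcs :=
    norm_sq_le_tsum_mul_tsum_of_hasSum_inner (hsum y) hc (hasSum_inner_adjoint_apply hy y)
  rw [inner_self_eq_norm_sq_to_K, norm_pow, RCLike.norm_ofReal, abs_norm] at hcs
  have hc0 : 0 ≤ ∑' j, ‖c j‖ ^ 2 := tsum_nonneg fun j => by positivity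
  have key : (‖y‖ ^ 2) ^ 2 ≤ (B * ‖y‖ ^ 2) * ∑' j, ‖c j‖ ^ 2 :=
    hcs.trans (mul_le_mul_of_nonneg_right (hup y) hc0)
  rcases (sq_nonneg ‖y‖).eq_or_lt with hy0 | hypos
  · rw [← hy0]
    positivity
  · nlinarith

end

theorem stmt4_general {H : Type*} [NormedAddCommGroup H] [InnerProductSpace ℂ H] [CompleteSpace H]
    {ι : Type*} {Hs : ι → Type*} [∀ j, NormedAddCommGroup (Hs j)]
    [∀ j, InnerProductSpace ℂ (Hs j)] [∀ j, CompleteSpace (Hs j)]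
    (Λ : ∀ j, H →L[ℂ] Hs j) (A B : ℝ) (hA : 0 < A) (hAB : A ≤ B)
    (hsum : ∀ f : H, Summable fun j => ‖Λ j f‖ ^ 2)
    (hlow : ∀ f : H, A * ‖f‖ ^ 2 ≤ ∑' j, ‖Λ j f‖ ^ 2)
    (hup : ∀ f : H, ∑' j, ‖Λ j f‖ ^ 2 ≤ B * ‖f‖ ^ 2)
    (S Sinv : H →L[ℂ] H)
    (hS : ∀ f : H, HasSum (fun j => adjoint (Λ j) (Λ j f)) (S f))
    (hinv₂ : S ∘L Sinv = 1)
    (I : Set ι) (SI : H →L[ℂ] H)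
    (hSI : ∀ f : H, HasSum (fun j : I => adjoint (Λ j) (Λ j (Sinv f))) (SI f)) :
    ∀ f : H, ‖SI f‖ ^ 2 ≤ B * A⁻¹ * ‖f‖ ^ 2 := by
  intro f
  have hB : 0 ≤ B := hA.le.trans hAB
  set g := Sinv f
  have hSg : S g = f := by simpa using DFunLike.congr_fun hinv₂ f
  have hcoeff : A * ∑' j, ‖Λ j g‖ ^ 2 ≤ ‖f‖ ^ 2 :=
    mul_tsum_norm_sq_le_of_hasSum_adjoint_apply (hlow g) (hSg ▸ hS g)
  have hsub : ∀ x : H, ∑' j : I, ‖Λ j x‖ ^ 2 ≤ ∑' j, ‖Λ j x‖ ^ 2 := fun x =>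
    (hsum x).tsum_subtype_le _ I fun j => by positivity
  calc ‖SI f‖ ^ 2 ≤ B * ∑' j : I, ‖Λ j g‖ ^ 2 :=
        norm_sq_le_of_hasSum_adjoint_apply hB (fun x => (hsum x).subtype I)
          (fun x => (hsub x).trans (hup x)) ((hsum g).subtype I) (hSI f)
    _ ≤ B * (A⁻¹ * ‖f‖ ^ 2) := by
        gcongr
        exact (hsub g).trans ((le_inv_mul_iff₀ hA).2 hcoeff)
    _ = B * A⁻¹ * ‖f‖ ^ 2 := (mul_assoc _ _ _).symm

theorem stmt4 {H : Type*} [NormedAddCommGroup H] [InnerProductSpace ℂ H] [CompleteSpace H]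
    {ι : Type*} {Hs : ι → Type*} [∀ j, NormedAddCommGroup (Hs j)]
    [∀ j, InnerProductSpace ℂ (Hs j)] [∀ j, CompleteSpace (Hs j)]
    (Λ : ∀ j, H →L[ℂ] Hs j) (A B : ℝ) (hA : 0 < A) (hAB : A ≤ B)
    (hsum : ∀ f : H, Summable fun j => ‖Λ j f‖ ^ 2)
    (hlow : ∀ f : H, A * ‖f‖ ^ 2 ≤ ∑' j, ‖Λ j f‖ ^ 2)
    (hup : ∀ f : H, ∑' j, ‖Λ j f‖ ^ 2 ≤ B * ‖f‖ ^ 2)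
    (S Sinv : H →L[ℂ] H)
    (hS : ∀ f : H, HasSum (fun j => adjoint (Λ j) (Λ j f)) (S f))
    (hinv₁ : Sinv ∘L S = 1) (hinv₂ : S ∘L Sinv = 1)
    (I : Set ι) (SI : H →L[ℂ] H)
    (hSI : ∀ f : H, HasSum (fun j : I => adjoint (Λ j) (Λ j (Sinv f))) (SI f)) :
    ∀ f : H, ‖SI f‖ ^ 2 ≤ B * A⁻¹ * ‖f‖ ^ 2 :=
  stmt4_general Λ A B hA hAB hsum hlow hup S Sinv hS hinv₂ I SI hSI
end

section
/- Let {Λ_j}_{j∈J} be a g-frame for H with canonical dual {Λ̃_j}, and for I ⊆ J set S_I f = Σ_{j∈I} Λ_j* Λ̃_j f. Then for every f ∈ H: Σ_{j∈I} ⟨Λ̃_j f, Λ_j f⟩ − ‖S_I f‖² = Σ_{j∈Iᶜ} conj(⟨Λ̃_j f, Λ_j f⟩) − ‖S_{Iᶜ} f‖². -/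
/-! Moving `Λ_j` to the other side as an adjoint, the series over `I` sums to `⟪S_I f, f⟫` and the
conjugated series over `Iᶜ` to `⟪f, S_{Iᶜ} f⟫`. Since `S_I f + S_{Iᶜ} f = S S⁻¹ f = f`, with
`u = S_I f`, `v = S_{Iᶜ} f` both sides of the identity equal `⟪u, v⟫`. -/

open ContinuousLinearMap

open scoped InnerProductSpace ComplexConjugate

section

variable {𝕜 E : Type*} [RCLike 𝕜] [NormedAddCommGroup E] [InnerProductSpace 𝕜 E]

theorem inner_add_sub_norm_sq_eq (u v : E) :
    ⟪u, u + v⟫_𝕜 - (‖u‖ : 𝕜) ^ 2 = ⟪u + v, v⟫_𝕜 - (‖v‖ : 𝕜) ^ 2 := by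
  rw [← inner_self_eq_norm_sq_to_K, ← inner_self_eq_norm_sq_to_K, inner_add_right, inner_add_left]
  ring

variable [CompleteSpace E] {κ : Type*} {F : κ → Type*} [∀ k, NormedAddCommGroup (F k)]
  [∀ k, InnerProductSpace 𝕜 (F k)] [∀ k, CompleteSpace (F k)]

theorem hasSum_conj_inner_apply_of_hasSum_adjoint (T : ∀ k, E →L[𝕜] F k) {x y : E}
    (h : HasSum (fun k => adjoint (T k) (T k x)) y) (g : E) :
    HasSum (fun k => conj ⟪T k x, T k g⟫_𝕜) ⟪g, y⟫_𝕜 := by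
  simpa only [innerSL_apply_apply, adjoint_inner_right, inner_conj_symm] using
    (innerSL 𝕜 g).hasSum h

theorem hasSum_inner_apply_of_hasSum_adjoint (T : ∀ k, E →L[𝕜] F k) {x y : E}
    (h : HasSum (fun k => adjoint (T k) (T k x)) y) (g : E) :
    HasSum (fun k => ⟪T k x, T k g⟫_𝕜) ⟪y, g⟫_𝕜 := by
  rw [← RCLike.hasSum_conj', inner_conj_symm]
  exact hasSum_conj_inner_apply_of_hasSum_adjoint T h g

end

theorem stmt5_general {H : Type*} [NormedAddCommGroup H] [InnerProductSpace ℂ H] [CompleteSpace H]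
    {ι : Type*} {Hs : ι → Type*} [∀ j, NormedAddCommGroup (Hs j)]
    [∀ j, InnerProductSpace ℂ (Hs j)] [∀ j, CompleteSpace (Hs j)]
    (Λ : ∀ j, H →L[ℂ] Hs j)
    (S Sinv : H →L[ℂ] H)
    (hS : ∀ f : H, HasSum (fun j => adjoint (Λ j) (Λ j f)) (S f))
    (hinv₂ : S ∘L Sinv = 1)
    (I : Set ι) (SI SIc : H →L[ℂ] H)
    (hSI : ∀ f : H, HasSum (fun j : I => adjoint (Λ j) (Λ j (Sinv f))) (SI f))
    (hSIc : ∀ f : H, HasSum (fun j : ↥Iᶜ => adjoint (Λ j) (Λ j (Sinv f))) (SIc f)) :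
    ∀ f : H,
      (∑' j : I, (inner ℂ (Λ j (Sinv f)) (Λ j f) : ℂ)) - (‖SI f‖ ^ 2 : ℂ) =
        (∑' j : ↥Iᶜ, (starRingEnd ℂ) (inner ℂ (Λ j (Sinv f)) (Λ j f) : ℂ)) - (‖SIc f‖ ^ 2 : ℂ) := by
  intro f
  have hsplit : SI f + SIc f = f := by
    rw [(HasSum.add_compl (f := fun j => adjoint (Λ j) (Λ j (Sinv f))) (hSI f) (hSIc f)).unique
      (hS (Sinv f))]
    simpa using DFunLike.congr_fun hinv₂ f
  rw [(hasSum_inner_apply_of_hasSum_adjoint (fun j : I => Λ j) (hSI f) f).tsum_eq,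
    (hasSum_conj_inner_apply_of_hasSum_adjoint (fun j : ↥Iᶜ => Λ j) (hSIc f) f).tsum_eq]
  have key := inner_add_sub_norm_sq_eq (𝕜 := ℂ) (SI f) (SIc f)
  rwa [hsplit] at key

theorem stmt5 {H : Type*} [NormedAddCommGroup H] [InnerProductSpace ℂ H] [CompleteSpace H]
    {ι : Type*} {Hs : ι → Type*} [∀ j, NormedAddCommGroup (Hs j)]
    [∀ j, InnerProductSpace ℂ (Hs j)] [∀ j, CompleteSpace (Hs j)]
    (Λ : ∀ j, H →L[ℂ] Hs j) (A B : ℝ) (hA : 0 < A) (hAB : A ≤ B)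
    (hsum : ∀ f : H, Summable fun j => ‖Λ j f‖ ^ 2)
    (hlow : ∀ f : H, A * ‖f‖ ^ 2 ≤ ∑' j, ‖Λ j f‖ ^ 2)
    (hup : ∀ f : H, ∑' j, ‖Λ j f‖ ^ 2 ≤ B * ‖f‖ ^ 2)
    (S Sinv : H →L[ℂ] H)
    (hS : ∀ f : H, HasSum (fun j => adjoint (Λ j) (Λ j f)) (S f))
    (hinv₁ : Sinv ∘L S = 1) (hinv₂ : S ∘L Sinv = 1)
    (I : Set ι) (SI SIc : H →L[ℂ] H)
    (hSI : ∀ f : H, HasSum (fun j : I => adjoint (Λ j) (Λ j (Sinv f))) (SI f))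
    (hSIc : ∀ f : H, HasSum (fun j : ↥Iᶜ => adjoint (Λ j) (Λ j (Sinv f))) (SIc f)) :
    ∀ f : H,
      (∑' j : I, (inner ℂ (Λ j (Sinv f)) (Λ j f) : ℂ)) - (‖SI f‖ ^ 2 : ℂ) =
        (∑' j : ↥Iᶜ, (starRingEnd ℂ) (inner ℂ (Λ j (Sinv f)) (Λ j f) : ℂ)) - (‖SIc f‖ ^ 2 : ℂ) :=
  stmt5_general Λ S Sinv hS hinv₂ I SI SIc hSI hSIc
end

section
/- Let Λ = (W_j, Λ_j, v_j) be a g-fusion frame for H with canonical dual Λ̃, and for I ⊆ J let S_I f = Σ_{j∈I} v_j² π_{W_j} Λ_j* Λ̃_j π_{W̃_j} f. Then for all f ∈ H: Σ_{j∈I} v_j² ⟨Λ̃_j π_{W̃_j} f, Λ_j π_{W_j} f⟩ − ‖S_I f‖² = Σ_{j∈Iᶜ} v_j² conj(⟨Λ̃_j π_{W̃_j} f, Λ_j π_{W_j} f⟩) − ‖S_{Iᶜ} f‖². -/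
open ContinuousLinearMap

/-- Orthogonal projection onto a complete subspace, as an operator on the whole space. -/
noncomputable def pProj {H : Type*} [NormedAddCommGroup H] [InnerProductSpace ℂ H]
    (V : Submodule ℂ H) [CompleteSpace V] : H →L[ℂ] H :=
  V.subtypeL ∘L V.orthogonalProjection

/-!
Write `Φⱼ = Λⱼ π_{Wⱼ}`. The frame operator is `S_Λ = Σⱼ vⱼ² Φⱼ* Φⱼ`, a sum of self-adjoint
operators, so `S_Λ` and its inverse are self-adjoint. Hence `S_Λ⁻¹` maps `W̃ⱼᗮ` into `Wⱼᗮ`, which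
gives `Λ̃ⱼ π_{W̃ⱼ} = Φⱼ S_Λ⁻¹` and therefore `S_I + S_{Iᶜ} = S_Λ S_Λ⁻¹ = id`. The two series are
`⟪S_I f, f⟫` and `⟪f, S_{Iᶜ} f⟫`, and whenever `P + Q = f` both `⟪P, f⟫ - ‖P‖²` and
`⟪f, Q⟫ - ‖Q‖²` equal `⟪P, Q⟫`.
-/

open scoped InnerProductSpace

theorem pProj_eq_starProjection {H : Type*} [NormedAddCommGroup H] [InnerProductSpace ℂ H]
    (V : Submodule ℂ H) [CompleteSpace V] : pProj V = V.starProjection :=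
  rfl

theorem IsSelfAdjoint.of_mul_eq_one {R : Type*} [Monoid R] [StarMul R] {s t : R}
    (hs : IsSelfAdjoint s) (h : s * t = 1) : IsSelfAdjoint t := by
  have hleft : star t * s = 1 := by
    rw [← hs.star_eq, ← star_mul, h, star_one]
  calc star t = star t * (s * t) := by rw [h, mul_one]
    _ = t := by rw [← mul_assoc, hleft, one_mul]

section InnerProductSpace

variable {𝕜 E F : Type*} [RCLike 𝕜] [NormedAddCommGroup E] [InnerProductSpace 𝕜 E]
  [NormedAddCommGroup F] [InnerProductSpace 𝕜 F]

theorem inner_sub_norm_sq_eq_of_add_eq {P Q f : E} (h : P + Q = f) :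
    ⟪P, f⟫_𝕜 - (‖P‖ : 𝕜) ^ 2 = ⟪f, Q⟫_𝕜 - (‖Q‖ : 𝕜) ^ 2 := by
  subst h
  simp only [← inner_self_eq_norm_sq_to_K, inner_add_left, inner_add_right]
  ring

theorem Submodule.starProjection_apply_starProjection_of_map_le {T : E →L[𝕜] E}
    (hT : (T : E →ₗ[𝕜] E).IsSymmetric) {W U : Submodule 𝕜 E} [W.HasOrthogonalProjection]
    [U.HasOrthogonalProjection] (hWU : W.map (T : E →ₗ[𝕜] E) ≤ U) (f : E) :
    W.starProjection (T (U.starProjection f)) = W.starProjection (T f) := by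
  rw [← sub_eq_zero, ← map_sub, ← map_sub, starProjection_apply_eq_zero_iff, mem_orthogonal]
  intro w hw
  have hTw : T w ∈ U := hWU ⟨w, hw, rfl⟩
  have hperp : U.starProjection f - f ∈ Uᗮ := by
    simpa using neg_mem (sub_starProjection_mem_orthogonal (K := U) f)
  rw [← ContinuousLinearMap.coe_coe, ← hT]
  exact inner_right_of_mem_orthogonal hTw hperp

variable [CompleteSpace E] [CompleteSpace F]

theorem Submodule.starProjection_adjoint_apply (W : Submodule 𝕜 E) [W.HasOrthogonalProjection]
    (Λ : E →L[𝕜] F) (y : F) :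
    W.starProjection (adjoint Λ y) = adjoint (Λ ∘L W.starProjection) y := by
  rw [adjoint_comp, (isSelfAdjoint_starProjection W).adjoint_eq, comp_apply]

theorem isSelfAdjoint_of_hasSum_apply {ι : Type*} {T : ι → E →L[𝕜] E} {S : E →L[𝕜] E}
    (hT : ∀ j, IsSelfAdjoint (T j)) (hS : ∀ x, HasSum (fun j => T j x) (S x)) :
    IsSelfAdjoint S := by
  refine isSelfAdjoint_iff_isSymmetric.2 fun x y => ?_
  have hx := (innerSLFlip 𝕜 y).hasSum (hS x)
  have hy := (innerSL 𝕜 x).hasSum (hS y)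
  simp only [innerSLFlip_apply_apply, innerSL_apply_apply] at hx hy
  exact hx.unique (hy.congr_fun fun j => (hT j).isSymmetric x y)

end InnerProductSpace

theorem stmt7_general {H : Type*} [NormedAddCommGroup H] [InnerProductSpace ℂ H] [CompleteSpace H]
    {ι : Type*} {Hs : ι → Type*} [∀ j, NormedAddCommGroup (Hs j)]
    [∀ j, InnerProductSpace ℂ (Hs j)] [∀ j, CompleteSpace (Hs j)]
    (W : ι → Submodule ℂ H) [∀ j, CompleteSpace (W j)]
    (v : ι → ℝ)
    (Λ : ∀ j, H →L[ℂ] Hs j)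
    (SΛ Sinv : H →L[ℂ] H)
    (hSΛ : ∀ f : H,
      HasSum (fun j => ((v j : ℂ) ^ 2) • pProj (W j) (adjoint (Λ j) (Λ j (pProj (W j) f)))) (SΛ f))
    (hinv₂ : SΛ ∘L Sinv = 1)
    (Wd : ι → Submodule ℂ H) [∀ j, CompleteSpace (Wd j)]
    (hWd : ∀ j, Wd j = Submodule.map (Sinv : H →ₗ[ℂ] H) (W j))
    (Λd : ∀ j, H →L[ℂ] Hs j) (hΛd : ∀ j, Λd j = (Λ j ∘L pProj (W j)) ∘L Sinv)
    (I : Set ι) (SI SIc : H →L[ℂ] H)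
    (hSI : ∀ f : H,
      HasSum (fun j : I => ((v j : ℂ) ^ 2) •
        pProj (W j) (adjoint (Λ j) (Λd j (pProj (Wd j) f)))) (SI f))
    (hSIc : ∀ f : H,
      HasSum (fun j : ↥Iᶜ => ((v j : ℂ) ^ 2) •
        pProj (W j) (adjoint (Λ j) (Λd j (pProj (Wd j) f)))) (SIc f)) :
    ∀ f : H,
      (∑' j : I, ((v j : ℂ) ^ 2) * (inner ℂ (Λd j (pProj (Wd j) f)) (Λ j (pProj (W j) f)) : ℂ)) -
          (‖SI f‖ ^ 2 : ℂ) =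
        (∑' j : ↥Iᶜ, ((v j : ℂ) ^ 2) *
            (starRingEnd ℂ) (inner ℂ (Λd j (pProj (Wd j) f)) (Λ j (pProj (W j) f)) : ℂ)) -
          (‖SIc f‖ ^ 2 : ℂ) := by
  intro f
  simp only [pProj_eq_starProjection, Submodule.starProjection_adjoint_apply] at hSΛ hΛd hSI hSIc ⊢
  have hSΛ_sa : IsSelfAdjoint SΛ :=
    isSelfAdjoint_of_hasSum_apply
      (T := fun j => ((v j : ℂ) ^ 2) • (adjoint (Λ j ∘L (W j).starProjection) ∘L
        (Λ j ∘L (W j).starProjection)))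
      (fun j => .smul (IsSelfAdjoint.pow (Complex.conj_ofReal (v j)) 2)
        (isPositive_adjoint_comp_self _).isSelfAdjoint)
      hSΛ
  have hSinv_sa : IsSelfAdjoint Sinv := hSΛ_sa.of_mul_eq_one hinv₂
  have hΛd_apply (j : ι) :
      Λd j ((Wd j).starProjection f) = Λ j ((W j).starProjection (Sinv f)) := by
    rw [hΛd, comp_apply, comp_apply,
      Submodule.starProjection_apply_starProjection_of_map_le hSinv_sa.isSymmetric (hWd j).ge]
  have hdecomp : SI f + SIc f = f := by
    set F : ι → H := fun j => ((v j : ℂ) ^ 2) •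
      adjoint (Λ j ∘L (W j).starProjection) (Λd j ((Wd j).starProjection f))
    have hparts : HasSum F (SI f + SIc f) := HasSum.add_compl (s := I) (f := F) (hSI f) (hSIc f)
    have hwhole : HasSum F (SΛ (Sinv f)) :=
      (hSΛ (Sinv f)).congr_fun fun j => by simp only [F, hΛd_apply]
    rw [hparts.unique hwhole]
    exact congr($hinv₂ f)
  have hI := (innerSLFlip ℂ f).hasSum (hSI f)
  have hIc := (innerSL ℂ f).hasSum (hSIc f)
  simp only [innerSLFlip_apply_apply, innerSL_apply_apply, inner_smul_left, inner_smul_right,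
    adjoint_inner_left, adjoint_inner_right, comp_apply, map_pow, Complex.conj_ofReal] at hI hIc
  simp only [inner_conj_symm]
  rw [hI.tsum_eq, hIc.tsum_eq]
  exact inner_sub_norm_sq_eq_of_add_eq hdecomp

theorem stmt7 {H : Type*} [NormedAddCommGroup H] [InnerProductSpace ℂ H] [CompleteSpace H]
    {ι : Type*} {Hs : ι → Type*} [∀ j, NormedAddCommGroup (Hs j)]
    [∀ j, InnerProductSpace ℂ (Hs j)] [∀ j, CompleteSpace (Hs j)]
    (W : ι → Submodule ℂ H) [∀ j, CompleteSpace (W j)]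
    (v : ι → ℝ) (hv : ∀ j, 0 < v j)
    (Λ : ∀ j, H →L[ℂ] Hs j) (A B : ℝ) (hA : 0 < A) (hAB : A ≤ B)
    (hsum : ∀ f : H, Summable fun j => (v j) ^ 2 * ‖Λ j (pProj (W j) f)‖ ^ 2)
    (hlow : ∀ f : H, A * ‖f‖ ^ 2 ≤ ∑' j, (v j) ^ 2 * ‖Λ j (pProj (W j) f)‖ ^ 2)
    (hup : ∀ f : H, ∑' j, (v j) ^ 2 * ‖Λ j (pProj (W j) f)‖ ^ 2 ≤ B * ‖f‖ ^ 2)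
    (SΛ Sinv : H →L[ℂ] H)
    (hSΛ : ∀ f : H,
      HasSum (fun j => ((v j : ℂ) ^ 2) • pProj (W j) (adjoint (Λ j) (Λ j (pProj (W j) f)))) (SΛ f))
    (hinv₁ : Sinv ∘L SΛ = 1) (hinv₂ : SΛ ∘L Sinv = 1)
    (Wd : ι → Submodule ℂ H) [∀ j, CompleteSpace (Wd j)]
    (hWd : ∀ j, Wd j = Submodule.map (Sinv : H →ₗ[ℂ] H) (W j))
    (Λd : ∀ j, H →L[ℂ] Hs j) (hΛd : ∀ j, Λd j = (Λ j ∘L pProj (W j)) ∘L Sinv)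
    (I : Set ι) (SI SIc : H →L[ℂ] H)
    (hSI : ∀ f : H,
      HasSum (fun j : I => ((v j : ℂ) ^ 2) •
        pProj (W j) (adjoint (Λ j) (Λd j (pProj (Wd j) f)))) (SI f))
    (hSIc : ∀ f : H,
      HasSum (fun j : ↥Iᶜ => ((v j : ℂ) ^ 2) •
        pProj (W j) (adjoint (Λ j) (Λd j (pProj (Wd j) f)))) (SIc f)) :
    ∀ f : H,
      (∑' j : I, ((v j : ℂ) ^ 2) * (inner ℂ (Λd j (pProj (Wd j) f)) (Λ j (pProj (W j) f)) : ℂ)) -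
          (‖SI f‖ ^ 2 : ℂ) =
        (∑' j : ↥Iᶜ, ((v j : ℂ) ^ 2) *
            (starRingEnd ℂ) (inner ℂ (Λd j (pProj (Wd j) f)) (Λ j (pProj (W j) f)) : ℂ)) -
          (‖SIc f‖ ^ 2 : ℂ) :=
  stmt7_general W v Λ SΛ Sinv hSΛ hinv₂ Wd hWd Λd hΛd I SI SIc hSI hSIc
end

section
/- Let Λ = (W_j, Λ_j, v_j) be a Parseval g-fusion frame for H and S_I f = Σ_{j∈I} v_j² π_{W_j} Λ_j* Λ_j π_{W_j} f for I ⊆ J. Then for all f ∈ H: Σ_{j∈I} v_j² ‖Λ_j π_{W_j} f‖² + ‖S_{Iᶜ} f‖² ≥ (3/4)‖f‖². -/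
open ContinuousLinearMap

/-!
Write `a = ∑_{j ∈ I} v_j² ‖Λ_j π_{W_j} f‖²` and `c = ∑_{j ∉ I} v_j² ‖Λ_j π_{W_j} f‖²`, so that
`a + c = ‖f‖²` by the Parseval identity. Since `c = Re ⟪f, S_{Iᶜ} f⟫ ≤ ‖f‖ ‖S_{Iᶜ} f‖`, completing the
square `‖S_{Iᶜ} f‖² ≥ ‖f‖ ‖S_{Iᶜ} f‖ - ‖f‖²/4` gives `a + ‖S_{Iᶜ} f‖² ≥ a + c - ‖f‖²/4 = 3/4 ‖f‖²`.
-/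

lemma three_div_four_mul_sq_le_add_sq {a c n s : ℝ} (hsum : a + c = n ^ 2) (hc : c ≤ n * s) :
    3 / 4 * n ^ 2 ≤ a + s ^ 2 := by
  nlinarith [sq_nonneg (s - n / 2)]

section

variable {H : Type*} [NormedAddCommGroup H] [InnerProductSpace ℂ H] [CompleteSpace H]
  {F : Type*} [NormedAddCommGroup F] [InnerProductSpace ℂ F] [CompleteSpace F]

omit [CompleteSpace H] in
lemma pProj_eq_starProjection_s8 (W : Submodule ℂ H) [CompleteSpace W] :
    pProj W = W.starProjection :=
  rfl

lemma inner_pProj_adjoint_apply_pProj (W : Submodule ℂ H) [CompleteSpace W] (A : H →L[ℂ] F)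
    (f : H) : inner ℂ f (pProj W (adjoint A (A (pProj W f)))) = (‖A (pProj W f)‖ ^ 2 : ℂ) := by
  rw [pProj_eq_starProjection_s8, ← Submodule.inner_starProjection_left_eq_right,
    adjoint_inner_right, inner_self_eq_norm_sq_to_K]
  rfl

lemma hasSum_re_inner_of_hasSum {κ : Type*} {Hs : κ → Type*} [∀ j, NormedAddCommGroup (Hs j)]
    [∀ j, InnerProductSpace ℂ (Hs j)] [∀ j, CompleteSpace (Hs j)]
    (W : κ → Submodule ℂ H) [∀ j, CompleteSpace (W j)] (v : κ → ℝ) (Λ : ∀ j, H →L[ℂ] Hs j)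
    {f g : H}
    (hg : HasSum (fun j => ((v j : ℂ) ^ 2) • pProj (W j) (adjoint (Λ j) (Λ j (pProj (W j) f)))) g) :
    HasSum (fun j => v j ^ 2 * ‖Λ j (pProj (W j) f)‖ ^ 2) (RCLike.re (inner ℂ f g)) := by
  have h := Complex.reCLM.hasSum ((innerSL ℂ f).hasSum hg)
  simp only [innerSL_apply_apply, inner_smul_right, inner_pProj_adjoint_apply_pProj] at h
  exact_mod_cast h

end

theorem stmt8_general {H : Type*} [NormedAddCommGroup H] [InnerProductSpace ℂ H] [CompleteSpace H]
    {ι : Type*} {Hs : ι → Type*} [∀ j, NormedAddCommGroup (Hs j)]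
    [∀ j, InnerProductSpace ℂ (Hs j)] [∀ j, CompleteSpace (Hs j)]
    (W : ι → Submodule ℂ H) [∀ j, CompleteSpace (W j)]
    (v : ι → ℝ)
    (Λ : ∀ j, H →L[ℂ] Hs j)
    (hP : ∀ f : H, HasSum (fun j => (v j) ^ 2 * ‖Λ j (pProj (W j) f)‖ ^ 2) (‖f‖ ^ 2))
    (I : Set ι) (SIc : H →L[ℂ] H)
    (hSIc : ∀ f : H,
      HasSum (fun j : ↥Iᶜ => ((v j : ℂ) ^ 2) •
        pProj (W j) (adjoint (Λ j) (Λ j (pProj (W j) f)))) (SIc f)) :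
    ∀ f : H,
      3 / 4 * ‖f‖ ^ 2 ≤ (∑' j : I, (v j) ^ 2 * ‖Λ j (pProj (W j) f)‖ ^ 2) + ‖SIc f‖ ^ 2 := by
  intro f
  have hsummable := (hP f).summable
  have hsplit := (hsummable.subtype I).tsum_add_tsum_compl (hsummable.subtype Iᶜ)
  rw [(hP f).tsum_eq] at hsplit
  have hc := (hasSum_re_inner_of_hasSum (fun j : ↥Iᶜ => W j) (fun j => v j) (fun j => Λ j)
    (hSIc f)).tsum_eq ▸ re_inner_le_norm f (SIc f)
  exact three_div_four_mul_sq_le_add_sq hsplit hc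

theorem stmt8 {H : Type*} [NormedAddCommGroup H] [InnerProductSpace ℂ H] [CompleteSpace H]
    {ι : Type*} {Hs : ι → Type*} [∀ j, NormedAddCommGroup (Hs j)]
    [∀ j, InnerProductSpace ℂ (Hs j)] [∀ j, CompleteSpace (Hs j)]
    (W : ι → Submodule ℂ H) [∀ j, CompleteSpace (W j)]
    (v : ι → ℝ) (hv : ∀ j, 0 < v j)
    (Λ : ∀ j, H →L[ℂ] Hs j)
    (hP : ∀ f : H, HasSum (fun j => (v j) ^ 2 * ‖Λ j (pProj (W j) f)‖ ^ 2) (‖f‖ ^ 2))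
    (I : Set ι) (SIc : H →L[ℂ] H)
    (hSIc : ∀ f : H,
      HasSum (fun j : ↥Iᶜ => ((v j : ℂ) ^ 2) •
        pProj (W j) (adjoint (Λ j) (Λ j (pProj (W j) f)))) (SIc f)) :
    ∀ f : H,
      3 / 4 * ‖f‖ ^ 2 ≤ (∑' j : I, (v j) ^ 2 * ‖Λ j (pProj (W j) f)‖ ^ 2) + ‖SIc f‖ ^ 2 :=
  stmt8_general W v Λ hP I SIc hSIc
end

section
/- Let S be a positive invertible bounded operator on H and M, N positive bounded operators with M + N = S. Then for all f ∈ H: ⟨M f, f⟩ − ⟨S⁻¹ M f, M f⟩ = ⟨N f, f⟩ − ⟨S⁻¹ N f, N f⟩. -/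
/-!
Writing `T` for the inverse of `S`, the identity holds already at the level of operators:
`M - M T M = N T M = N - N T N`, because `M = (M + N) T M` and `N = N T (M + N)`.
Self-adjointness of `M` and `N` turns `⟪T (A f), A f⟫` into `⟪(A T A) f, f⟫` for `A = M, N`.
-/

open ContinuousLinearMap

theorem sub_mul_mul_self_eq_of_add_eq {R : Type*} [Ring R] {a b s t : R}
    (hts : t * s = 1) (hst : s * t = 1) (hab : a + b = s) :
    a - a * t * a = b - b * t * b := by
  subst hab
  have ha : a = a * t * a + b * t * a := by
    rw [← add_mul, ← add_mul, hst, one_mul]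
  have hb : b = b * t * a + b * t * b := by
    rw [mul_assoc, mul_assoc, ← mul_add, ← mul_add, hts, mul_one]
  calc a - a * t * a = b * t * a := sub_eq_of_eq_add' ha
    _ = b - b * t * b := (sub_eq_of_eq_add hb).symm

theorem IsSelfAdjoint.inner_sub_inner_apply_eq {H : Type*} [NormedAddCommGroup H]
    [InnerProductSpace ℂ H] [CompleteSpace H] {A : H →L[ℂ] H} (hA : IsSelfAdjoint A)
    (T : H →L[ℂ] H) (f : H) :
    inner ℂ (A f) f - inner ℂ (T (A f)) (A f) = inner ℂ ((A - A * T * A) f) f := by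
  rw [← adjoint_inner_left, hA.adjoint_eq, sub_apply, inner_sub_left]
  rfl

theorem stmt15_general {H : Type*} [NormedAddCommGroup H] [InnerProductSpace ℂ H] [CompleteSpace H]
    (S Sinv M N : H →L[ℂ] H)
    (hinv₁ : Sinv ∘L S = 1) (hinv₂ : S ∘L Sinv = 1)
    (hM : M.IsPositive) (hN : N.IsPositive) (hMN : M + N = S) :
    ∀ f : H,
      (inner ℂ (M f) f : ℂ) - (inner ℂ (Sinv (M f)) (M f) : ℂ) =
        (inner ℂ (N f) f : ℂ) - (inner ℂ (Sinv (N f)) (N f) : ℂ) := by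
  intro f
  rw [hM.isSelfAdjoint.inner_sub_inner_apply_eq, hN.isSelfAdjoint.inner_sub_inner_apply_eq,
    sub_mul_mul_self_eq_of_add_eq hinv₁ hinv₂ hMN]

theorem stmt15 {H : Type*} [NormedAddCommGroup H] [InnerProductSpace ℂ H] [CompleteSpace H]
    (S Sinv M N : H →L[ℂ] H) (hS : S.IsPositive)
    (hinv₁ : Sinv ∘L S = 1) (hinv₂ : S ∘L Sinv = 1)
    (hM : M.IsPositive) (hN : N.IsPositive) (hMN : M + N = S) :
    ∀ f : H,
      (inner ℂ (M f) f : ℂ) - (inner ℂ (Sinv (M f)) (M f) : ℂ) =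
        (inner ℂ (N f) f : ℂ) - (inner ℂ (Sinv (N f)) (N f) : ℂ) :=
  stmt15_general S Sinv M N hinv₁ hinv₂ hM hN hMN
end

section
/- Let S be a positive invertible bounded operator on a Hilbert space H and M, N positive operators with M + N = S. Then (1/2) S ≤ M S⁻¹ M + N S⁻¹ N ≤ (3/2) S in the operator order. -/
/-!
Since `M + N = S`, expanding with `N = S - M` gives
`2 (M S⁻¹ M + N S⁻¹ N) = S + (M - N) S⁻¹ (M - N) ≥ S` and
`M S⁻¹ M + N S⁻¹ N = S - 2 (M - M S⁻¹ M) ≤ S`, where `M S⁻¹ M ≤ M` because `0 ≤ M ≤ S` makes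
`√M √S⁻¹` a contraction.
-/

open CFC
open scoped ComplexOrder

section Ring

variable {R : Type*} [Ring R] {a c : R} {u : Rˣ}

lemma mul_inv_mul_add_mul_inv_mul_eq_sub (h : a + c = u) :
    a * ↑u⁻¹ * a + c * ↑u⁻¹ * c = u - 2 • (a - a * ↑u⁻¹ * a) := by
  obtain rfl : c = u - a := eq_sub_of_add_eq' h
  simp only [mul_sub, sub_mul, Units.mul_inv, Units.inv_mul_cancel_right, one_mul]
  abel

lemma two_nsmul_mul_inv_mul_add_mul_inv_mul (h : a + c = u) :
    2 • (a * ↑u⁻¹ * a + c * ↑u⁻¹ * c) = u + (a - c) * ↑u⁻¹ * (a - c) := by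
  obtain rfl : c = u - a := eq_sub_of_add_eq' h
  simp only [mul_sub, sub_mul, Units.mul_inv, Units.inv_mul_cancel_right, one_mul]
  abel

end Ring

section CStarAlgebra

variable {A : Type*} [CStarAlgebra A] [PartialOrder A] [StarOrderedRing A]

lemma mul_inv_mul_le_self {a : A} {b : Aˣ} (ha : 0 ≤ a) (hab : a ≤ b) :
    a * ↑b⁻¹ * a ≤ a := by
  set x := sqrt a * sqrt (↑b⁻¹ : A)
  have hb : 0 ≤ (b : A) := ha.trans hab
  have hx : ‖x‖ ≤ 1 := (le_iff_norm_sqrt_mul_sqrt_inv ha hb).mp hab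
  have hxx : x * star x ≤ 1 := by
    calc x * star x ≤ algebraMap ℝ A (‖x‖ ^ 2) := CStarAlgebra.mul_star_le_algebraMap_norm_sq
      _ ≤ algebraMap ℝ A 1 := by
        gcongr
        exact pow_le_one₀ (norm_nonneg x) hx
      _ = 1 := map_one _
  have hx_conj : sqrt a * (x * star x) * sqrt a = a * ↑b⁻¹ * a := by
    have : sqrt a * (x * star x) * sqrt a =
        (sqrt a * sqrt a) * (sqrt (↑b⁻¹ : A) * sqrt (↑b⁻¹ : A)) * (sqrt a * sqrt a) := by
      simp only [x, star_mul, (sqrt_nonneg a).isSelfAdjoint.star_eq,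
        (sqrt_nonneg (↑b⁻¹ : A)).isSelfAdjoint.star_eq, mul_assoc]
    rw [this, sqrt_mul_sqrt_self a, sqrt_mul_sqrt_self _ (inv_nonneg_of_nonneg b hb)]
  calc a * ↑b⁻¹ * a = sqrt a * (x * star x) * sqrt a := hx_conj.symm
    _ ≤ sqrt a * 1 * sqrt a := conjugate_le_conjugate_of_nonneg hxx (sqrt_nonneg a)
    _ = a := by rw [mul_one, sqrt_mul_sqrt_self a]

variable {a c : A} {b : Aˣ}

lemma half_smul_le_mul_inv_mul_add_mul_inv_mul (ha : 0 ≤ a) (hc : 0 ≤ c) (h : a + c = b) :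
    (1 / 2 : ℂ) • (b : A) ≤ a * ↑b⁻¹ * a + c * ↑b⁻¹ * c := by
  have hb : 0 ≤ (b : A) := h ▸ add_nonneg ha hc
  have hdiff : 0 ≤ (a - c) * ↑b⁻¹ * (a - c) :=
    (ha.isSelfAdjoint.sub hc.isSelfAdjoint).conjugate_nonneg (inv_nonneg_of_nonneg b hb)
  have hsplit : a * ↑b⁻¹ * a + c * ↑b⁻¹ * c - (1 / 2 : ℂ) • (b : A) =
      (1 / 2 : ℂ) • ((a - c) * ↑b⁻¹ * (a - c)) := by
    calc _ = (1 / 2 : ℂ) • (2 • (a * ↑b⁻¹ * a + c * ↑b⁻¹ * c)) - (1 / 2 : ℂ) • (b : A) := by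
          module
      _ = _ := by
          rw [two_nsmul_mul_inv_mul_add_mul_inv_mul h]
          module
  rw [← sub_nonneg, hsplit]
  exact smul_nonneg (by positivity) hdiff

lemma mul_inv_mul_add_mul_inv_mul_le (ha : 0 ≤ a) (hc : 0 ≤ c) (h : a + c = b) :
    a * ↑b⁻¹ * a + c * ↑b⁻¹ * c ≤ b := by
  have hab : a ≤ b := h ▸ le_add_of_nonneg_right hc
  rw [mul_inv_mul_add_mul_inv_mul_eq_sub h]
  exact sub_le_self _ (nsmul_nonneg (sub_nonneg.mpr (mul_inv_mul_le_self ha hab)) 2)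

end CStarAlgebra

open ContinuousLinearMap

theorem stmt16_general {H : Type*} [NormedAddCommGroup H] [InnerProductSpace ℂ H] [CompleteSpace H]
    (S Sinv M N : H →L[ℂ] H)
    (hinv₁ : Sinv ∘L S = 1) (hinv₂ : S ∘L Sinv = 1)
    (hM : M.IsPositive) (hN : N.IsPositive) (hMN : M + N = S) :
    ((M ∘L Sinv ∘L M + N ∘L Sinv ∘L N) - (1 / 2 : ℂ) • S).IsPositive ∧
      ((3 / 2 : ℂ) • S - (M ∘L Sinv ∘L M + N ∘L Sinv ∘L N)).IsPositive := by
  let S' : (H →L[ℂ] H)ˣ := ⟨S, Sinv, hinv₂, hinv₁⟩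
  rw [← nonneg_iff_isPositive] at hM hN
  have hS : 0 ≤ S := hMN ▸ add_nonneg hM hN
  have hX : M ∘L Sinv ∘L M + N ∘L Sinv ∘L N = M * ↑S'⁻¹ * M + N * ↑S'⁻¹ * N := by
    simp only [S', mul_assoc]
    rfl
  simp only [← nonneg_iff_isPositive, sub_nonneg, hX]
  refine ⟨half_smul_le_mul_inv_mul_add_mul_inv_mul hM hN hMN, ?_⟩
  calc _ ≤ S := mul_inv_mul_add_mul_inv_mul_le hM hN hMN
    _ ≤ (3 / 2 : ℂ) • S := by
      rw [← sub_nonneg, show (3 / 2 : ℂ) • S - S = (1 / 2 : ℂ) • S by module]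
      exact smul_nonneg (by positivity) hS

theorem stmt16 {H : Type*} [NormedAddCommGroup H] [InnerProductSpace ℂ H] [CompleteSpace H]
    (S Sinv M N : H →L[ℂ] H) (hS : S.IsPositive)
    (hinv₁ : Sinv ∘L S = 1) (hinv₂ : S ∘L Sinv = 1)
    (hM : M.IsPositive) (hN : N.IsPositive) (hMN : M + N = S) :
    ((M ∘L Sinv ∘L M + N ∘L Sinv ∘L N) - (1 / 2 : ℂ) • S).IsPositive ∧
      ((3 / 2 : ℂ) • S - (M ∘L Sinv ∘L M + N ∘L Sinv ∘L N)).IsPositive :=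
  stmt16_general S Sinv M N hinv₁ hinv₂ hM hN hMN
end
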